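/- arXiv:2002.08924 — 2 statements merged into one kernel-verified Lean document; each statement's English description precedes it below -/
import Mathlib

section
/- Let f: {0,1,2}^3 → {0,1,2} be a rule conserving the number of 1's (weight Ψ_1, indicator of state 1) whose restriction to binary arguments is compatible with elementary CA 184 (i.e., for x_1,x_2,x_3 ∈ {0,1}, f(x_1,x_2,x_3) = 1 if f_184(x_1,x_2,x_3) = 1, and f(x_1,x_2,x_3) ∈ {0,2} otherwise). Then the number of such rules f is exactly 2^19. -/
instance (n : ℕ) : NeZero (n + 3) := ⟨by omega⟩

abbrev Rule3 := Fin 3 → Fin 3 → Fin 3 → Fin 3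
abbrev Rule2 := Fin 2 → Fin 2 → Fin 2 → Fin 2

/-- Global map of a ternary nearest-neighbour CA on cyclic configurations. -/
def glob3 {n : ℕ} (f : Rule3) (x : ZMod n → Fin 3) : ZMod n → Fin 3 :=
  fun i => f (x (i - 1)) (x i) (x (i + 1))

/-- Global map of a binary (elementary) CA on cyclic configurations. -/
def glob2 {n : ℕ} (g : Rule2) (x : ZMod n → Fin 2) : ZMod n → Fin 2 :=
  fun i => g (x (i - 1)) (x i) (x (i + 1))

/-- `f` conserves the additive quantity with weight `Ψ` on all cyclic
configurations of all lengths `L ≥ 3`. -/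
def conserves3 (f : Rule3) (Ψ : Fin 3 → ℤ) : Prop :=
  ∀ L : ℕ, ∀ x : ZMod (L + 3) → Fin 3,
    (∑ i, Ψ (glob3 f x i)) = ∑ i, Ψ (x i)

def Ψ0 : Fin 3 → ℤ := fun x => (1 - (x.val : ℤ)) * (2 - (x.val : ℤ)) / 2
def Ψ1 : Fin 3 → ℤ := fun x => (x.val : ℤ) * (2 - (x.val : ℤ))
def Ψ2 : Fin 3 → ℤ := fun x => (x.val : ℤ) * ((x.val : ℤ) - 1) / 2
def Ψs : Fin 3 → ℤ := fun x => (x.val : ℤ)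

/-- `f` conserves the number of 0's, of 1's and of 2's. -/
def allConserving3 (f : Rule3) : Prop :=
  conserves3 f Ψ0 ∧ conserves3 f Ψ1 ∧ conserves3 f Ψ2

/-- A binary rule is number-conserving. -/
def numConserving2 (g : Rule2) : Prop :=
  ∀ L : ℕ, ∀ x : ZMod (L + 3) → Fin 2,
    (∑ i, (glob2 g x i).val) = ∑ i, (x i).val

/-- The elementary CA rule with Wolfram number `w`. -/
def ecaRule (w : ℕ) : Rule2 :=
  fun a b c => ⟨w / 2 ^ (4 * a.val + 2 * b.val + c.val) % 2, Nat.mod_lt _ (by norm_num)⟩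

/-- Wolfram number of a binary rule. -/
def wolfram2 (g : Rule2) : ℕ :=
  ∑ a : Fin 2, ∑ b : Fin 2, ∑ c : Fin 2,
    (g a b c).val * 2 ^ (4 * a.val + 2 * b.val + c.val)

/-- Embedding of `{0,1}` into `{0,1,2}` as `{0,1}`. -/
def i01 : Fin 2 → Fin 3 := Fin.castLE (by norm_num)
/-- Embedding of `{0,1}` into `{0,1,2}` as `{0,2}`. -/
def i02 : Fin 2 → Fin 3 := fun a => ⟨2 * a.val, by have := a.isLt; omega⟩
/-- Embedding of `{0,1}` into `{0,1,2}` as `{1,2}`. -/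
def i12 : Fin 2 → Fin 3 := fun a => ⟨a.val + 1, by have := a.isLt; omega⟩

/-- The binary projection `f|_{01}` of `f` exists and equals the binary rule `h`. -/
def agrees01 (f : Rule3) (h : Rule2) : Prop :=
  ∀ a b c : Fin 2, f (i01 a) (i01 b) (i01 c) = i01 (h a b c)

/-- The binary projection `f|_{02}` of `f` exists and equals the binary rule `h`. -/
def agrees02 (f : Rule3) (h : Rule2) : Prop :=
  ∀ a b c : Fin 2, f (i02 a) (i02 b) (i02 c) = i02 (h a b c)

/-- The binary projection `f|_{12}` of `f` exists and equals the binary rule `h`. -/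
def agrees12 (f : Rule3) (h : Rule2) : Prop :=
  ∀ a b c : Fin 2, f (i12 a) (i12 b) (i12 c) = i12 (h a b c)

/-- `f` is reducible to two states: all three binary projections exist. -/
def reducible3 (f : Rule3) : Prop :=
  (∃ h, agrees01 f h) ∧ (∃ h, agrees02 f h) ∧ (∃ h, agrees12 f h)

/-- Number of occurrences of symbol `k` in the cyclic configuration `x`. -/
def count3 {n : ℕ} [NeZero n] (x : ZMod n → Fin 3) (k : Fin 3) : ℕ :=
  (Finset.univ.filter fun i => x i = k).card

/-- `f` is compatible with elementary rule 184 on binary arguments. -/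
def compat184 (f : Rule3) : Prop :=
  ∀ a b c : Fin 2,
    (ecaRule 184 a b c = 1 → f (i01 a) (i01 b) (i01 c) = 1) ∧
    (ecaRule 184 a b c = 0 →
      f (i01 a) (i01 b) (i01 c) = 0 ∨ f (i01 a) (i01 b) (i01 c) = 2)

/-!
Hattori–Takesue: testing conservation of `Ψ` on the cyclic configurations `a b c 0 0` shows that
it is equivalent to the local balance `Ψ (f a b c) = Ψ a + J b c - J a b` with the flux
`J u v = Ψ (f 0 0 u) + Ψ (f 0 u v)`. For `Ψ1`, conservation and compatibility with rule 184 only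
depend on the pattern of neighbourhoods sent to `1`, and the balance determines that pattern from
its slice `a = 0`. Checking the `2 ^ 9` slices leaves exactly two patterns: the `1`s move as in
rule 184 with `2` acting either as an empty cell or as an obstacle. Both patterns have nine
entries, and each of the other eighteen neighbourhoods may be sent to `0` or `2`, so there are
`2 * 2 ^ 18` rules.
-/

section HattoriTakesue

variable (f : Rule3) (Ψ : Fin 3 → ℤ)

def flux (u v : Fin 3) : ℤ := Ψ (f 0 0 u) + Ψ (f 0 u v)

theorem conserves3_of_balance (J : Fin 3 → Fin 3 → ℤ)
    (hJ : ∀ a b c, Ψ (f a b c) = Ψ a + J b c - J a b) : conserves3 f Ψ := by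
  intro L x
  have shift (g : ZMod (L + 3) → ℤ) : ∑ i, g (i - 1) = ∑ i, g i :=
    Fintype.sum_equiv (Equiv.subRight 1) _ _ fun _ => rfl
  calc ∑ i, Ψ (glob3 f x i)
      = ∑ i, (Ψ (x (i - 1)) + (J (x i) (x (i + 1)) - J (x (i - 1)) (x i))) :=
        Finset.sum_congr rfl fun i _ => (hJ _ _ _).trans (add_sub_assoc _ _ _)
    _ = ∑ i, Ψ (x i) := by
        rw [Finset.sum_add_distrib, Finset.sum_sub_distrib, shift (fun i => Ψ (x i)),
          ← shift (fun i => J (x i) (x (i + 1)))]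
        simp

theorem conserves3_five_cells (h : conserves3 f Ψ) (a b c : Fin 3) :
    Ψ (f 0 a b) + Ψ (f a b c) + Ψ (f b c 0) + Ψ (f c 0 0) + Ψ (f 0 0 a)
      = Ψ a + Ψ b + Ψ c + Ψ 0 + Ψ 0 :=
  (Fin.sum_univ_five _).symm.trans ((h 2 ![a, b, c, 0, 0]).trans (Fin.sum_univ_five _))

theorem conserves3_iff_balance :
    conserves3 f Ψ ↔ ∀ a b c, Ψ (f a b c) = Ψ a + flux f Ψ b c - flux f Ψ a b := by
  refine ⟨fun h a b c => ?_, conserves3_of_balance f Ψ _⟩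
  have habc := conserves3_five_cells f Ψ h a b c
  have hbc0 := conserves3_five_cells f Ψ h b c 0
  have h000 := conserves3_five_cells f Ψ h 0 0 0
  unfold flux
  linarith

end HattoriTakesue

abbrev Pattern3 := Fin 3 → Fin 3 → Fin 3 → Bool

def ones (f : Rule3) : Pattern3 := fun a b c => f a b c = 1

def sliceFlux (s : Fin 3 → Fin 3 → Bool) (u v : Fin 3) : ℤ := (s 0 u).toInt + (s u v).toInt

def IsBalanced (T : Pattern3) : Prop :=
  ∀ a b c, (T a b c).toInt = Ψ1 a + sliceFlux (T 0) b c - sliceFlux (T 0) a b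

instance : DecidablePred IsBalanced := fun _ => Fintype.decidableForallFintype

def IsCompat184 (T : Pattern3) : Prop :=
  ∀ a b c : Fin 2, T (i01 a) (i01 b) (i01 c) = decide (ecaRule 184 a b c = 1)

instance : DecidablePred IsCompat184 := fun _ => Fintype.decidableForallFintype

def balancedExtension (s : Fin 3 → Fin 3 → Bool) : Pattern3 :=
  fun a b c => Ψ1 a + sliceFlux s b c - sliceFlux s a b = 1

def rule184TwoEmpty : Pattern3 := fun a b c => (b == 1 && c == 1) || (a == 1 && b != 1)

def rule184TwoObstacle : Pattern3 := fun a b c => (b == 1 && c != 0) || (a == 1 && b == 0)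

theorem balancedExtension_eq_rule184TwoEmpty_or_rule184TwoObstacle :
    ∀ s : Fin 3 → Fin 3 → Bool,
      IsBalanced (balancedExtension s) → IsCompat184 (balancedExtension s) →
      balancedExtension s = rule184TwoEmpty ∨ balancedExtension s = rule184TwoObstacle := by
  decide +kernel

theorem IsBalanced.eq_balancedExtension {T : Pattern3} (h : IsBalanced T) :
    T = balancedExtension (T 0) := by
  ext a b c
  rw [balancedExtension, ← h a b c]
  cases T a b c <;> rfl

theorem isBalanced_and_isCompat184_iff (T : Pattern3) :
    IsBalanced T ∧ IsCompat184 T ↔ T = rule184TwoEmpty ∨ T = rule184TwoObstacle := by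
  constructor
  · rintro ⟨hbal, hcompat⟩
    have hT := hbal.eq_balancedExtension
    rw [hT] at hbal hcompat ⊢
    exact balancedExtension_eq_rule184TwoEmpty_or_rule184TwoObstacle _ hbal hcompat
  · rintro (rfl | rfl) <;> decide

theorem Ψ1_eq_toInt (v : Fin 3) : Ψ1 v = (decide (v = 1)).toInt := by
  fin_cases v <;> rfl

theorem conserves3_Ψ1_iff_isBalanced (f : Rule3) : conserves3 f Ψ1 ↔ IsBalanced (ones f) := by
  have hflux : flux f Ψ1 = sliceFlux (ones f 0) := by
    ext u v
    simp only [flux, sliceFlux, ones, Ψ1_eq_toInt]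
  simp only [conserves3_iff_balance, hflux, IsBalanced, ones, Ψ1_eq_toInt]

theorem compat184_iff_isCompat184 (f : Rule3) : compat184 f ↔ IsCompat184 (ones f) := by
  have hvalue : ∀ (r : Fin 2) (v : Fin 3),
      ((r = 1 → v = 1) ∧ (r = 0 → v = 0 ∨ v = 2)) ↔ decide (v = 1) = decide (r = 1) := by
    decide
  exact forall₃_congr fun a b c => hvalue _ _

def onesFiberEquiv (T : Pattern3) :
    {f : Rule3 // ones f = T} ≃ ∀ a b c, {v : Fin 3 // decide (v = 1) = T a b c} where
  toFun f a b c := ⟨f.1 a b c, congrFun (congrFun (congrFun f.2 a) b) c⟩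
  invFun g := ⟨fun a b c => g a b c, by ext a b c; exact (g a b c).2⟩

theorem card_ones_eq (T : Pattern3) :
    Nat.card {f : Rule3 // ones f = T} = ∏ a, ∏ b, ∏ c, if T a b c then 1 else 2 := by
  have hfiber (t : Bool) :
      Fintype.card {v : Fin 3 // decide (v = 1) = t} = if t then 1 else 2 := by
    cases t <;> rfl
  rw [Nat.card_congr (onesFiberEquiv T), Nat.card_eq_fintype_card]
  simp only [Fintype.card_pi, hfiber]

/-- There are exactly `2^19` ternary rules conserving the number of 1's that are
compatible with elementary rule 184. -/
theorem count_ones_conserving_compat184 :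
    Nat.card {f : Rule3 // conserves3 f Ψ1 ∧ compat184 f} = 2 ^ 19 := by
  have hiff (f : Rule3) :
      conserves3 f Ψ1 ∧ compat184 f ↔
        ones f = rule184TwoEmpty ∨ ones f = rule184TwoObstacle := by
    rw [conserves3_Ψ1_iff_isBalanced, compat184_iff_isCompat184, isBalanced_and_isCompat184_iff]
  have hdisj :
      Disjoint (fun f => ones f = rule184TwoEmpty) (fun f => ones f = rule184TwoObstacle) :=
    Pi.disjoint_iff.2 fun _ =>
      disjoint_iff_inf_le.2 fun h => absurd (h.1.symm.trans h.2) (by decide)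
  rw [Nat.card_congr ((Equiv.subtypeEquivRight hiff).trans (subtypeOrEquiv _ _ hdisj)),
    Nat.card_sum, card_ones_eq, card_ones_eq]
  decide
end

section
/- For every all-conserving ternary nearest-neighbour rule f, there is no all-conserving f for which all three binary projections f|_{01}, f|_{02}, f|_{12} exist and each is (as an elementary CA rule) equal to rule 184 or rule 226. -/
/-!
The values of `f` on triples with a repeated symbol lie in one of the binary subalphabets, so they
are fixed by the three projections. Each of the cyclic configurations `0012`, `0021`, `0102`,
`0112` and `0121` contains exactly two triples of distinct symbols, so conservation of the three
symbol counts on it fixes the pair of values of `f` there as a multiset. Whichever of rules 184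
and 226 the projections are, these five conditions on the six values of `f` at the permutations
of `012` are inconsistent.
-/

open List

theorem ecaRule_wolfram2 (g : Rule2) : ecaRule (wolfram2 g) = g := by
  set_option maxRecDepth 10000 in
  revert g; decide

lemma Ψ0_eq (y : Fin 3) : Ψ0 y = if y = 0 then 1 else 0 := by fin_cases y <;> rfl
lemma Ψ1_eq (y : Fin 3) : Ψ1 y = if y = 1 then 1 else 0 := by fin_cases y <;> rfl
lemma Ψ2_eq (y : Fin 3) : Ψ2 y = if y = 2 then 1 else 0 := by fin_cases y <;> rfl

lemma sum_ite_eq_count3 {n : ℕ} [NeZero n] (x : ZMod n → Fin 3) (k : Fin 3) :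
    ∑ i, (if x i = k then 1 else 0 : ℤ) = count3 x k := by
  rw [Finset.sum_boole, count3]

lemma count3_eq_count {n : ℕ} [NeZero n] (x : ZMod n → Fin 3) (k : Fin 3) :
    count3 x k = (Finset.univ.val.map x).count k := by
  simp [count3, Multiset.count_map, Finset.card, eq_comm]

section

variable {f : Rule3}

lemma conserves3_iff_count3 {Ψ : Fin 3 → ℤ} (k : Fin 3) (hΨ : ∀ y, Ψ y = if y = k then 1 else 0) :
    conserves3 f Ψ ↔ ∀ L (x : ZMod (L + 3) → Fin 3), count3 (glob3 f x) k = count3 x k := by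
  simp only [conserves3, hΨ, sum_ite_eq_count3, Nat.cast_inj]

lemma allConserving3_iff_count3 :
    allConserving3 f ↔ ∀ L (x : ZMod (L + 3) → Fin 3) k, count3 (glob3 f x) k = count3 x k := by
  rw [allConserving3, conserves3_iff_count3 0 Ψ0_eq, conserves3_iff_count3 1 Ψ1_eq,
    conserves3_iff_count3 2 Ψ2_eq]
  refine ⟨fun ⟨h0, h1, h2⟩ L x k => ?_, fun h => ⟨(h · · 0), (h · · 1), (h · · 2)⟩⟩
  fin_cases k
  exacts [h0 L x, h1 L x, h2 L x]

lemma allConserving3.map_glob3 (hf : allConserving3 f) {L : ℕ} (x : ZMod (L + 3) → Fin 3) :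
    Finset.univ.val.map (glob3 f x) = Finset.univ.val.map x :=
  Multiset.ext.2 fun k => by
    rw [← count3_eq_count, ← count3_eq_count, allConserving3_iff_count3.1 hf]

lemma allConserving3.perm_four (hf : allConserving3 f) (a b c d : Fin 3) :
    [f d a b, f a b c, f b c d, f c d a] ~ [a, b, c, d] :=
  -- `ZMod 4` is `Fin 4`, whose `univ` unfolds to the list `[0, 1, 2, 3]`.
  Multiset.coe_eq_coe.1 (hf.map_glob3 (L := 1) ![a, b, c, d])

theorem not_perm_four_of_projections_184_226 {w01 w02 w12 : ℕ} (hw01 : w01 = 184 ∨ w01 = 226)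
    (hw02 : w02 = 184 ∨ w02 = 226) (hw12 : w12 = 184 ∨ w12 = 226)
    (h01 : agrees01 f (ecaRule w01)) (h02 : agrees02 f (ecaRule w02))
    (h12 : agrees12 f (ecaRule w12)) :
    ¬ ∀ a b c d : Fin 3, [f d a b, f a b c, f b c d, f c d a] ~ [a, b, c, d] := by
  intro hf
  have h0012 := hf 0 0 1 2
  have h0021 := hf 0 0 2 1
  have h0102 := hf 0 1 0 2
  have h0112 := hf 0 1 1 2
  have h0121 := hf 0 1 2 1
  rw [show f 2 0 0 = _ from h02 1 0 0, show f 0 0 1 = _ from h01 0 0 1] at h0012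
  rw [show f 1 0 0 = _ from h01 1 0 0, show f 0 0 2 = _ from h02 0 0 1] at h0021
  rw [show f 0 1 0 = _ from h01 0 1 0, show f 0 2 0 = _ from h02 0 1 0] at h0102
  rw [show f 0 1 1 = _ from h01 0 1 1, show f 1 1 2 = _ from h12 0 0 1] at h0112
  rw [show f 1 0 1 = _ from h01 1 0 1, show f 1 2 1 = _ from h12 0 1 0] at h0121
  revert h0012 h0021 h0102 h0112 h0121
  generalize f 0 1 2 = u012, f 1 2 0 = u120, f 2 0 1 = u201
  generalize f 0 2 1 = u021, f 2 1 0 = u210, f 1 0 2 = u102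
  revert u012 u120 u201 u021 u210 u102
  rcases hw01 with rfl | rfl <;> rcases hw02 with rfl | rfl <;> rcases hw12 with rfl | rfl <;>
    decide

end

/-- No all-conserving ternary rule has all three binary projections equal to
elementary rule 184 or 226. -/
theorem no_allConserving_with_projections_184_226 :
    ¬ ∃ f : Rule3, allConserving3 f ∧
      (∃ h, agrees01 f h ∧ (wolfram2 h = 184 ∨ wolfram2 h = 226)) ∧
      (∃ h, agrees02 f h ∧ (wolfram2 h = 184 ∨ wolfram2 h = 226)) ∧
      (∃ h, agrees12 f h ∧ (wolfram2 h = 184 ∨ wolfram2 h = 226)) := by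
  rintro ⟨f, hf, ⟨g01, h01, w01⟩, ⟨g02, h02, w02⟩, ⟨g12, h12, w12⟩⟩
  rw [← ecaRule_wolfram2 g01] at h01
  rw [← ecaRule_wolfram2 g02] at h02
  rw [← ecaRule_wolfram2 g12] at h12
  exact not_perm_four_of_projections_184_226 w01 w02 w12 h01 h02 h12 hf.perm_four
end
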